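/- Suppose σ_{y·zx} > 0, σ_{z·x} > 0, σ_{w·x} > 0, σ_{w·zx} > 0, σ_{z·wx} > 0, df > 1, and fix q > 0. Writing f(t,d) := √(1 + (1 + t²)/(d − 1)) and ρ := ρ_{yw·zx}, the confidence interval for the Z-coefficient computed with W included equals the interval obtained from the regression without W recentred and rescaled as follows: [β̂ − q·SE(β̂), β̂ + q·SE(β̂)] = [b̂ + (−t_W ρ − q f(t_W, df)√(1 − ρ²))·SE(b̂), b̂ + (−t_W ρ + q f(t_W, df)√(1 − ρ²))·SE(b̂)]. -/

import Mathlib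

open scoped BigOperators

/-- Weighted inner product on ℝⁿ: `(A,B) := (∑ i, wᵢ Aᵢ Bᵢ) / (∑ i, wᵢ)`. -/
noncomputable def wip {n : ℕ} (w A B : Fin n → ℝ) : ℝ :=
  (∑ i, w i * A i * B i) / (∑ i, w i)

/-- `P` is the best linear predictor (orthogonal projection with respect to the
weighted inner product `wip w`) of `A` onto the span of the collection `C`. -/
def IsBlp {n : ℕ} (w : Fin n → ℝ) (C : Set (Fin n → ℝ)) (A P : Fin n → ℝ) : Prop :=
  P ∈ Submodule.span ℝ C ∧ ∀ v ∈ Submodule.span ℝ C, wip w (A - P) v = 0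

/-!
Frisch–Waugh–Lovell: adding a regressor `B` to `C` changes the residual of `A` by its
projection onto the residual of `B`. Applied three times, this gives
`σ²_{a·bc} = σ²_{a·c} - σ²_{ab·c} / σ²_{b·c}` for the three relevant residual variances and the
omitted-variable-bias formula `β̂ = b̂ - δ̂·(σ_{wz·x}/σ²_{z·x})`, where `δ̂ = σ_{yw·zx}/σ²_{w·zx}`
is the `W`-coefficient of the long regression. The remaining identity is
`σ²_{z·wx} σ²_{w·x} = σ²_{w·zx} σ²_{z·x} = σ²_{z·x} σ²_{w·x} - σ²_{wz·x}`, which turns the shift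
`β̂ - b̂` into `-t_W ρ SE(b̂)` and `SE(β̂)` into `f(t_W, df) √(1 - ρ²) SE(b̂)`.
-/

section

variable {n : ℕ} {w : Fin n → ℝ}

theorem wip_comm (A B : Fin n → ℝ) : wip w A B = wip w B A := by
  simp only [wip, mul_right_comm]

theorem wip_add_right (A B C : Fin n → ℝ) : wip w A (B + C) = wip w A B + wip w A C := by
  simp only [wip, Pi.add_apply, mul_add, Finset.sum_add_distrib, add_div]

theorem wip_smul_right (c : ℝ) (A B : Fin n → ℝ) : wip w A (c • B) = c * wip w A B := by
  rw [wip, wip, mul_div_assoc', Finset.mul_sum]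
  congr 1
  exact Finset.sum_congr rfl fun i _ => by rw [Pi.smul_apply, smul_eq_mul]; ring

theorem wip_sub_right (A B C : Fin n → ℝ) : wip w A (B - C) = wip w A B - wip w A C := by
  rw [sub_eq_add_neg, ← neg_one_smul ℝ C, wip_add_right, wip_smul_right]; ring

theorem wip_zero_right (A : Fin n → ℝ) : wip w A 0 = 0 := by
  simpa using wip_smul_right (w := w) 0 A 0

theorem wip_sub_left (A B C : Fin n → ℝ) : wip w (A - B) C = wip w A C - wip w B C := by
  rw [wip_comm, wip_sub_right, wip_comm C, wip_comm C]

theorem wip_smul_left (c : ℝ) (A B : Fin n → ℝ) : wip w (c • A) B = c * wip w A B := by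
  rw [wip_comm, wip_smul_right, wip_comm B]

theorem wip_sub_smul_self (A B : Fin n → ℝ) (c : ℝ) :
    wip w (A - c • B) (A - c • B) = wip w A A - 2 * c * wip w A B + c ^ 2 * wip w B B := by
  simp only [wip_sub_left, wip_sub_right, wip_smul_left, wip_smul_right, wip_comm B A]
  ring

theorem wip_sub_proj_self (A B : Fin n → ℝ) :
    wip w (A - (wip w A B / wip w B B) • B) (A - (wip w A B / wip w B B) • B)
      = wip w A A - wip w A B ^ 2 / wip w B B := by
  rw [wip_sub_smul_self]
  rcases eq_or_ne (wip w B B) 0 with h | h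
  · simp [h]
  · field_simp; ring

theorem eq_zero_of_wip_self_eq_zero (hw : ∀ i, 0 < w i) {v : Fin n → ℝ}
    (h : wip w v v = 0) : v = 0 := by
  have hterm : ∀ i, 0 ≤ w i * v i * v i := fun i => by
    rw [mul_assoc]; exact mul_nonneg (hw i).le (mul_self_nonneg _)
  funext i
  rcases div_eq_zero_iff.mp h with hsum | hsum
  · have := (Finset.sum_eq_zero_iff_of_nonneg fun i _ => hterm i).mp hsum i (Finset.mem_univ i)
    rw [mul_assoc] at this
    exact mul_self_eq_zero.mp ((mul_eq_zero.mp this).resolve_left (hw i).ne')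
  · exact absurd ((Finset.sum_eq_zero_iff_of_nonneg fun i _ => (hw i).le).mp hsum i
      (Finset.mem_univ i)) (hw i).ne'

theorem wip_eq_zero_of_mem_span {C : Set (Fin n → ℝ)} {A : Fin n → ℝ}
    (h : ∀ v ∈ C, wip w A v = 0) {v : Fin n → ℝ} (hv : v ∈ Submodule.span ℝ C) :
    wip w A v = 0 := by
  induction hv using Submodule.span_induction with
  | mem x hx => exact h x hx
  | zero => exact wip_zero_right A
  | add x y _ _ hx hy => rw [wip_add_right, hx, hy, add_zero]
  | smul c x _ hx => rw [wip_smul_right, hx, mul_zero]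

namespace IsBlp

variable {C : Set (Fin n → ℝ)} {A B P Q : Fin n → ℝ}

theorem wip_sub_mem (h : IsBlp w C A P) (U : Fin n → ℝ) {v : Fin n → ℝ}
    (hv : v ∈ Submodule.span ℝ C) : wip w (A - P) (U - v) = wip w (A - P) U := by
  rw [wip_sub_right, h.2 v hv, sub_zero]

theorem wip_self_eq_zero_of_mem (h : IsBlp w C A P) (hA : A ∈ Submodule.span ℝ C) :
    wip w (A - P) (A - P) = 0 :=
  h.2 _ (Submodule.sub_mem _ hA h.1)

theorem unique (hw : ∀ i, 0 < w i) (hP : IsBlp w C A P) (hQ : IsBlp w C A Q) : P = Q := by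
  have hPQ : P - Q ∈ Submodule.span ℝ C := Submodule.sub_mem _ hP.1 hQ.1
  have h0 : wip w (P - Q) (P - Q) = 0 :=
    calc wip w (P - Q) (P - Q) = wip w ((A - Q) - (A - P)) (P - Q) := by congr 1; abel
      _ = 0 := by rw [wip_sub_left, hQ.2 _ hPQ, hP.2 _ hPQ, sub_zero]
  exact sub_eq_zero.mp (eq_zero_of_wip_self_eq_zero hw h0)

theorem insert_regressor (hw : ∀ i, 0 < w i) (hP : IsBlp w C A P) (hQ : IsBlp w C B Q) :
    IsBlp w (insert B C) A (P + (wip w (A - P) (B - Q) / wip w (B - Q) (B - Q)) • (B - Q)) := by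
  have hle : Submodule.span ℝ C ≤ Submodule.span ℝ (insert B C) :=
    Submodule.span_mono (Set.subset_insert B C)
  have hB : B ∈ Submodule.span ℝ (insert B C) := Submodule.subset_span (Set.mem_insert B C)
  refine ⟨Submodule.add_mem _ (hle hP.1) (Submodule.smul_mem _ _ (Submodule.sub_mem _ hB
    (hle hQ.1))), fun v hv => wip_eq_zero_of_mem_span ?_ hv⟩
  rintro v (rfl | hv)
  · rw [sub_add_eq_sub_sub, wip_sub_left, wip_smul_left, ← hP.wip_sub_mem v hQ.1,
      ← hQ.wip_sub_mem v hQ.1, sub_eq_zero]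
    refine (div_mul_cancel_of_imp fun h0 => ?_).symm
    rw [eq_zero_of_wip_self_eq_zero hw h0, wip_zero_right]
  · rw [sub_add_eq_sub_sub, wip_sub_left, wip_smul_left, hP.2 v (Submodule.subset_span hv),
      hQ.2 v (Submodule.subset_span hv), mul_zero, sub_zero]

theorem sub_eq_of_insert {P' : Fin n → ℝ} (hP' : IsBlp w (insert B C) A P')
    (hw : ∀ i, 0 < w i) (hP : IsBlp w C A P) (hQ : IsBlp w C B Q) :
    A - P' = (A - P) - (wip w (A - P) (B - Q) / wip w (B - Q) (B - Q)) • (B - Q) := by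
  rw [hP'.unique hw (hP.insert_regressor hw hQ), sub_add_eq_sub_sub]

end IsBlp

end

theorem Submodule.eq_of_sub_smul_mem {K M : Type*} [Field K] [AddCommGroup M] [Module K M]
    {p : Submodule K M} {x v : M} {a b : K} (hx : x ∉ p)
    (ha : v - a • x ∈ p) (hb : v - b • x ∈ p) : a = b := by
  by_contra hab
  have : (b - a) • x ∈ p := by
    convert p.sub_mem ha hb using 1; rw [sub_smul]; abel
  exact hx ((p.smul_mem_iff (sub_ne_zero.mpr (Ne.symm hab))).mp this)

theorem omitted_variable_bias {K M : Type*} [Field K] [AddCommGroup M] [Module K M]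
    {C : Set M} {Y Z W Pzx Pwx Pyzx Pwzx Pyzxw : M} {bhat betahat deltahat c d : K}
    (hZ : Z ∉ Submodule.span K (insert W C))
    (hrw : W - Pwzx = (W - Pwx) - d • (Z - Pzx))
    (hry : Y - Pyzxw = (Y - Pyzx) - c • (W - Pwzx))
    (hPwx : Pwx ∈ Submodule.span K C) (hPzx : Pzx ∈ Submodule.span K C)
    (hb : Pyzx - bhat • Z ∈ Submodule.span K C)
    (hbeta : Pyzxw - betahat • Z - deltahat • W ∈ Submodule.span K C) :
    betahat = bhat - c * d := by
  have hle := Submodule.span_mono (R := K) (Set.subset_insert W C)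
  have hW : W ∈ Submodule.span K (insert W C) := Submodule.subset_span (Set.mem_insert W C)
  refine Submodule.eq_of_sub_smul_mem (v := Pyzxw) hZ ?_ ?_
  · rw [show Pyzxw - betahat • Z = (Pyzxw - betahat • Z - deltahat • W) + deltahat • W by abel]
    exact add_mem (hle hbeta) (Submodule.smul_mem _ _ hW)
  · rw [show Pyzxw - (bhat - c * d) • Z = (Pyzx - bhat • Z) + c • ((W - Pwx) + d • Pzx) by
      linear_combination (norm := module) -hry + c • hrw]
    exact add_mem (hle hb) (Submodule.smul_mem _ _
      (add_mem (sub_mem hW (hle hPwx)) (Submodule.smul_mem _ _ (hle hPzx))))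

theorem interval_shift_eq {a b c e g df s u : ℝ} (ha : 0 < a) (hb : 0 < b) (hc : 0 < c)
    (he : 0 < e) (hg : 0 < g) (hdf : 0 < df) (hcg : c * g = e * b) :
    (s / c) / (√g / (√df * √c)) * (u / (√a * √e)) * (√a / (√df * √b)) = u / e * (s / b) := by
  have hroot : √c * √g = √e * √b := by
    rw [← Real.sqrt_mul hc.le, ← Real.sqrt_mul he.le, hcg]
  have := Real.sqrt_pos.2 ha
  have := Real.sqrt_pos.2 hb
  have := Real.sqrt_pos.2 hc
  have := Real.sqrt_pos.2 he
  have := Real.sqrt_pos.2 hg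
  have := Real.sqrt_pos.2 hdf
  field_simp
  -- write `c`, `e`, `b` as squares of their roots and use `hroot`
  linear_combination (s * u * √g * √e * √b) * Real.mul_self_sqrt hc.le
    - (s * u * √e * √b * √c) * hroot - (s * u * √c * √b * √b) * Real.mul_self_sqrt he.le
    - (s * u * √c * e) * Real.mul_self_sqrt hb.le

theorem interval_halfwidth_eq {a b c e g y df s u : ℝ} (ha : 0 < a) (hb : 0 < b) (hc : 0 < c)
    (he : 0 < e) (hg : 0 < g) (hdf : 1 < df)
    (hg_eq : g = b - s ^ 2 / c) (hy_eq : y = a - u ^ 2 / e) :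
    √(1 + (1 + ((s / c) / (√g / (√df * √c))) ^ 2) / (df - 1)) * √(1 - (u / (√a * √e)) ^ 2)
      * (√a / (√df * √b)) = √y / (√(df - 1) * √g) := by
  have hdf1 : 0 < df - 1 := sub_pos.2 hdf
  have hf : 1 + (1 + ((s / c) / (√g / (√df * √c))) ^ 2) / (df - 1) = df * b / ((df - 1) * g) := by
    have hs : s ^ 2 = c * (b - g) := by rw [hg_eq]; field_simp; ring
    rw [div_pow, div_pow, div_pow, mul_pow, Real.sq_sqrt hg.le, Real.sq_sqrt (by linarith),
      Real.sq_sqrt hc.le]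
    field_simp
    linear_combination df * hs
  have hρ : 1 - (u / (√a * √e)) ^ 2 = y / a := by
    rw [div_pow, mul_pow, Real.sq_sqrt ha.le, Real.sq_sqrt he.le, hy_eq]
    field_simp
  rw [hf, hρ, Real.sqrt_div' _ ha.le, Real.sqrt_div' _ (by positivity), Real.sqrt_mul (by linarith),
    Real.sqrt_mul hdf1.le]
  have := Real.sqrt_pos.2 ha
  have := Real.sqrt_pos.2 hb
  have := Real.sqrt_pos.2 hg
  have := Real.sqrt_pos.2 hdf1
  have := Real.sqrt_pos.2 (zero_lt_one.trans hdf)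
  field_simp

theorem stmt5_general {n : ℕ} (w : Fin n → ℝ) (hw : ∀ i, 0 < w i)
    (X : Set (Fin n → ℝ))
    (Y Z W : Fin n → ℝ)
    (Pzx Pwx Pyzx Pwzx Pzwx Pyzxw : Fin n → ℝ)
    (hPzx : IsBlp w X Z Pzx)
    (hPwx : IsBlp w X W Pwx)
    (hPyzx : IsBlp w (insert Z X) Y Pyzx)
    (hPwzx : IsBlp w (insert Z X) W Pwzx)
    (hPzwx : IsBlp w (insert W X) Z Pzwx)
    (hPyzxw : IsBlp w (insert Z (insert W X)) Y Pyzxw)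
    (bhat betahat deltahat : ℝ)
    (hb : Pyzx - bhat • Z ∈ Submodule.span ℝ X)
    (hbeta : Pyzxw - betahat • Z - deltahat • W ∈ Submodule.span ℝ X)
    (hσyzx : 0 < wip w (Y - Pyzx) (Y - Pyzx))
    (hσzx : 0 < wip w (Z - Pzx) (Z - Pzx))
    (hσwx : 0 < wip w (W - Pwx) (W - Pwx))
    (hσwzx : 0 < wip w (W - Pwzx) (W - Pwzx))
    (hσzwx : 0 < wip w (Z - Pzwx) (Z - Pzwx))
    (hdf : 1 < (n : ℝ) - (Module.finrank ℝ (Submodule.span ℝ X) : ℝ) - 1)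
    (q : ℝ) :
    let df : ℝ := (n : ℝ) - (Module.finrank ℝ (Submodule.span ℝ X) : ℝ) - 1
    let σyzx := Real.sqrt (wip w (Y - Pyzx) (Y - Pyzx))
    let σzx := Real.sqrt (wip w (Z - Pzx) (Z - Pzx))
    let σwx := Real.sqrt (wip w (W - Pwx) (W - Pwx))
    let σwzx := Real.sqrt (wip w (W - Pwzx) (W - Pwzx))
    let σzwx := Real.sqrt (wip w (Z - Pzwx) (Z - Pzwx))
    let σyzxw := Real.sqrt (wip w (Y - Pyzxw) (Y - Pyzxw))
    let SEb := σyzx / (Real.sqrt df * σzx)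
    let SEbeta := σyzxw / (Real.sqrt (df - 1) * σzwx)
    let tW := (wip w (W - Pwx) (Z - Pzx) / wip w (W - Pwx) (W - Pwx)) /
      (σzwx / (Real.sqrt df * σwx))
    let ρ := wip w (Y - Pyzx) (W - Pwzx) / (σyzx * σwzx)
    let f := Real.sqrt (1 + (1 + tW ^ 2) / (df - 1))
    Set.Icc (betahat - q * SEbeta) (betahat + q * SEbeta)
      = Set.Icc (bhat + (-tW * ρ - q * f * Real.sqrt (1 - ρ ^ 2)) * SEb)
          (bhat + (-tW * ρ + q * f * Real.sqrt (1 - ρ ^ 2)) * SEb) := by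
  intro df σyzx σzx σwx σwzx σzwx σyzxw SEb SEbeta tW ρ f
  have hrzwx := hPzwx.sub_eq_of_insert hw hPzx hPwx
  have hrwzx := hPwzx.sub_eq_of_insert hw hPwx hPzx
  have hryzxw := (Set.insert_comm Z W X ▸ hPyzxw).sub_eq_of_insert hw hPyzx hPwzx
  set c := wip w (Y - Pyzx) (W - Pwzx) / wip w (W - Pwzx) (W - Pwzx)
  set d := wip w (W - Pwx) (Z - Pzx) / wip w (Z - Pzx) (Z - Pzx)
  have hβ : betahat = bhat - c * d := omitted_variable_bias
    (fun hZ => hσzwx.ne' (hPzwx.wip_self_eq_zero_of_mem hZ)) hrwzx hryzxw hPwx.1 hPzx.1 hb hbeta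
  have hvar_zwx : wip w (Z - Pzwx) (Z - Pzwx) = wip w (Z - Pzx) (Z - Pzx)
      - wip w (W - Pwx) (Z - Pzx) ^ 2 / wip w (W - Pwx) (W - Pwx) := by
    rw [hrzwx, wip_sub_proj_self, wip_comm (Z - Pzx) (W - Pwx)]
  have hvar_wzx : wip w (W - Pwzx) (W - Pwzx) = wip w (W - Pwx) (W - Pwx)
      - wip w (W - Pwx) (Z - Pzx) ^ 2 / wip w (Z - Pzx) (Z - Pzx) := by
    rw [hrwzx, wip_sub_proj_self]
  have hvar_yzxw : wip w (Y - Pyzxw) (Y - Pyzxw) = wip w (Y - Pyzx) (Y - Pyzx)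
      - wip w (Y - Pyzx) (W - Pwzx) ^ 2 / wip w (W - Pwzx) (W - Pwzx) := by
    rw [hryzxw, wip_sub_proj_self]
  have hshift : tW * ρ * SEb = c * d :=
    interval_shift_eq hσyzx hσzx hσwx hσwzx hσzwx (by linarith)
      (by rw [hvar_zwx, hvar_wzx]; field_simp)
  have hscale : f * √(1 - ρ ^ 2) * SEb = SEbeta :=
    interval_halfwidth_eq hσyzx hσzx hσwx hσwzx hσzwx hdf hvar_zwx hvar_yzxw
  congr 1
  · linear_combination hβ + hshift + q * hscale
  · linear_combination hβ + hshift - q * hscale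

/-- under the positivity conditions, `df > 1` and `q > 0`, the
confidence interval computed with `W` included equals the recentred/rescaled interval
`[b̂ + (−t_Wρ − q f(t_W,df)√(1−ρ²))·SE(b̂), b̂ + (−t_Wρ + q f(t_W,df)√(1−ρ²))·SE(b̂)]`,
where `f(t,d) = √(1 + (1+t²)/(d−1))` and `ρ = ρ_{yw·zx}`. -/
theorem stmt5 {n : ℕ} (w : Fin n → ℝ) (hw : ∀ i, 0 < w i)
    (X : Set (Fin n → ℝ)) (hXfin : X.Finite)
    (h1 : (fun _ => (1 : ℝ)) ∈ Submodule.span ℝ X)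
    (Y Z W : Fin n → ℝ)
    (Pzx Pwx Pyzx Pwzx Pzwx Pyzxw : Fin n → ℝ)
    (hPzx : IsBlp w X Z Pzx)
    (hPwx : IsBlp w X W Pwx)
    (hPyzx : IsBlp w (insert Z X) Y Pyzx)
    (hPwzx : IsBlp w (insert Z X) W Pwzx)
    (hPzwx : IsBlp w (insert W X) Z Pzwx)
    (hPyzxw : IsBlp w (insert Z (insert W X)) Y Pyzxw)
    (bhat betahat deltahat : ℝ)
    (hb : Pyzx - bhat • Z ∈ Submodule.span ℝ X)
    (hbeta : Pyzxw - betahat • Z - deltahat • W ∈ Submodule.span ℝ X)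
    (hσyzx : 0 < wip w (Y - Pyzx) (Y - Pyzx))
    (hσzx : 0 < wip w (Z - Pzx) (Z - Pzx))
    (hσwx : 0 < wip w (W - Pwx) (W - Pwx))
    (hσwzx : 0 < wip w (W - Pwzx) (W - Pwzx))
    (hσzwx : 0 < wip w (Z - Pzwx) (Z - Pzwx))
    (hdf : 1 < (n : ℝ) - (Module.finrank ℝ (Submodule.span ℝ X) : ℝ) - 1)
    (q : ℝ) (hq : 0 < q) :
    let df : ℝ := (n : ℝ) - (Module.finrank ℝ (Submodule.span ℝ X) : ℝ) - 1
    let σyzx := Real.sqrt (wip w (Y - Pyzx) (Y - Pyzx))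
    let σzx := Real.sqrt (wip w (Z - Pzx) (Z - Pzx))
    let σwx := Real.sqrt (wip w (W - Pwx) (W - Pwx))
    let σwzx := Real.sqrt (wip w (W - Pwzx) (W - Pwzx))
    let σzwx := Real.sqrt (wip w (Z - Pzwx) (Z - Pzwx))
    let σyzxw := Real.sqrt (wip w (Y - Pyzxw) (Y - Pyzxw))
    let SEb := σyzx / (Real.sqrt df * σzx)
    let SEbeta := σyzxw / (Real.sqrt (df - 1) * σzwx)
    let tW := (wip w (W - Pwx) (Z - Pzx) / wip w (W - Pwx) (W - Pwx)) /
      (σzwx / (Real.sqrt df * σwx))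
    let ρ := wip w (Y - Pyzx) (W - Pwzx) / (σyzx * σwzx)
    let f := Real.sqrt (1 + (1 + tW ^ 2) / (df - 1))
    Set.Icc (betahat - q * SEbeta) (betahat + q * SEbeta)
      = Set.Icc (bhat + (-tW * ρ - q * f * Real.sqrt (1 - ρ ^ 2)) * SEb)
          (bhat + (-tW * ρ + q * f * Real.sqrt (1 - ρ ^ 2)) * SEb) :=
  stmt5_general w hw X Y Z W Pzx Pwx Pyzx Pwzx Pzwx Pyzxw hPzx hPwx hPyzx hPwzx hPzwx hPyzxw bhat
    betahat deltahat hb hbeta hσyzx hσzx hσwx hσwzx hσzwx hdf q
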